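/- Let R be a nonassociative ring with a bijective additive map σ satisfying σ(1)=1 and an additive map δ with δ(1)=0. In S = R[X;σ,δ], for every element p ∈ S, the left degree equals the right degree: deg_l(p) = deg_r(p), where deg_l is taken with respect to representations p = Σ rᵢXⁱ and deg_r with respect to representations p = Σ Xⁱrᵢ. -/

import Mathlib

open Finset
open scoped Classical

section Defs

variable {R : Type*} {S : Type*}

/-- Iterated power: `pw x 0 = 1`, `pw x (n+1) = pw x n * x`. -/
def pw [One S] [Mul S] (x : S) : ℕ → S
  | 0 => 1
  | n + 1 => pw x n * x

/-- `x` is power-associative. -/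
def PowAssoc [One S] [Mul S] (x : S) : Prop := ∀ m n : ℕ, pw x m * pw x n = pw x (m + n)

variable [NonAssocRing R] [NonAssocRing S]

/-- Interpret a finitely supported coefficient family as a left polynomial `Σ f(cᵢ)·xⁱ`. -/
noncomputable def lpoly (f : R →+* S) (x : S) (c : ℕ →₀ R) : S :=
  c.sum fun i r => f r * pw x i

/-- Right polynomial `Σ xⁱ·f(cᵢ)`. -/
noncomputable def rpoly (f : R →+* S) (x : S) (c : ℕ →₀ R) : S :=
  c.sum fun i r => pw x i * f r

/-- Left degree (`⊥` plays the role of `-∞`), computed from a representation as a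
left polynomial in `x` (unique when `{1,x,x²,…}` is a left basis). -/
noncomputable def degl (f : R →+* S) (x : S) (p : S) : WithBot ℕ :=
  if h : ∃ c : ℕ →₀ R, lpoly f x c = p then (Classical.choose h).support.max else ⊥

/-- Left leading coefficient (`0` for the zero polynomial). -/
noncomputable def lcl (f : R →+* S) (x : S) (p : S) : R :=
  if h : ∃ c : ℕ →₀ R, lpoly f x c = p then
    (Classical.choose h) (WithBot.unbotD 0 (Classical.choose h).support.max) else 0

/-- Right degree. -/
noncomputable def degr (f : R →+* S) (x : S) (p : S) : WithBot ℕ :=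
  if h : ∃ c : ℕ →₀ R, rpoly f x c = p then (Classical.choose h).support.max else ⊥

/-- Right leading coefficient. -/
noncomputable def lcr (f : R →+* S) (x : S) (p : S) : R :=
  if h : ∃ c : ℕ →₀ R, rpoly f x c = p then
    (Classical.choose h) (WithBot.unbotD 0 (Classical.choose h).support.max) else 0

/-- `(S,x)` is a left generalized nonassociative Ore extension of `R`
(with the embedding `f : R →+* S`). -/
structure IsLeftGNOE (f : R →+* S) (x : S) : Prop where
  inj : Function.Injective f
  powAssoc : PowAssoc x
  basis : Function.Bijective (lpoly f x)
  closed : ∀ (m n : ℕ) (r s : R), ∃ c : ℕ →₀ R,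
    lpoly f x c = (f r * pw x m) * (f s * pw x n) ∧ ∀ i, m + n < i → c i = 0

/-- `(S,x)` is a right generalized nonassociative Ore extension of `R`. -/
structure IsRightGNOE (f : R →+* S) (x : S) : Prop where
  inj : Function.Injective f
  powAssoc : PowAssoc x
  basis : Function.Bijective (rpoly f x)
  closed : ∀ (m n : ℕ) (r s : R), ∃ c : ℕ →₀ R,
    rpoly f x c = (pw x m * f r) * (pw x n * f s) ∧ ∀ i, m + n < i → c i = 0

/-- Right ideal of a (nonassociative) ring. -/
def IsRightIdeal (T : Type*) [NonAssocRing T] (I : Set T) : Prop :=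
  (0 : T) ∈ I ∧ (∀ a b, a ∈ I → b ∈ I → a + b ∈ I) ∧ (∀ a, a ∈ I → -a ∈ I) ∧
    ∀ a t, a ∈ I → a * t ∈ I

/-- Left ideal of a (nonassociative) ring. -/
def IsLeftIdeal (T : Type*) [NonAssocRing T] (I : Set T) : Prop :=
  (0 : T) ∈ I ∧ (∀ a b, a ∈ I → b ∈ I → a + b ∈ I) ∧ (∀ a, a ∈ I → -a ∈ I) ∧
    ∀ a t, a ∈ I → t * a ∈ I

/-- The right ideal generated by a set. -/
def rIdealGen (T : Type*) [NonAssocRing T] (G : Set T) : Set T :=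
  ⋂₀ {I : Set T | IsRightIdeal T I ∧ G ⊆ I}

/-- The left ideal generated by a set. -/
def lIdealGen (T : Type*) [NonAssocRing T] (G : Set T) : Set T :=
  ⋂₀ {I : Set T | IsLeftIdeal T I ∧ G ⊆ I}

/-- Right Noetherian: every right ideal is finitely generated. -/
def RightNoeth (T : Type*) [NonAssocRing T] : Prop :=
  ∀ I : Set T, IsRightIdeal T I → ∃ G : Finset T, I = rIdealGen T ↑G

/-- Left Noetherian: every left ideal is finitely generated. -/
def LeftNoeth (T : Type*) [NonAssocRing T] : Prop :=
  ∀ I : Set T, IsLeftIdeal T I → ∃ G : Finset T, I = lIdealGen T ↑G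

/-- `M` is a right `R`-submodule of `S` (via `f`). -/
def IsRightRSub (f : R →+* S) (M : Set S) : Prop :=
  (0 : S) ∈ M ∧ (∀ a b, a ∈ M → b ∈ M → a + b ∈ M) ∧ (∀ a, a ∈ M → -a ∈ M) ∧
    ∀ a r, a ∈ M → a * f r ∈ M

/-- `M` is a left `R`-submodule of `S` (via `f`). -/
def IsLeftRSub (f : R →+* S) (M : Set S) : Prop :=
  (0 : S) ∈ M ∧ (∀ a b, a ∈ M → b ∈ M → a + b ∈ M) ∧ (∀ a, a ∈ M → -a ∈ M) ∧
    ∀ a r, a ∈ M → f r * a ∈ M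

/-- The right `R`-submodule of `S` generated by a set. -/
def rSubGen (f : R →+* S) (G : Set S) : Set S :=
  ⋂₀ {M : Set S | IsRightRSub f M ∧ G ⊆ M}

/-- `s` belongs to the right ideal of `S` generated by `p 0, …, p (n-1)` and admits a
left-degree-additive representation `s = Σⱼ (⋯((p_{iⱼ} s_{j1})s_{j2})⋯)s_{jm}` whose degree
bound `max_j (deg_l p_{iⱼ} + Σₖ deg_l s_{jk})` equals `deg_l s`. -/
def LDegAddMem (f : R →+* S) (x : S) {n : ℕ} (p : Fin n → S) (s : S) : Prop :=
  ∃ L : List (Fin n × List S),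
    s = (L.map fun t => t.2.foldl (· * ·) (p t.1)).sum ∧
    degl f x s
      = (L.map fun t => degl f x (p t.1) + (t.2.map (degl f x)).sum).foldr max ⊥

/-- `s` belongs to the left ideal of `S` generated by `p 0, …, p (n-1)` and admits a
right-degree-additive representation. -/
def RDegAddMem (f : R →+* S) (x : S) {n : ℕ} (p : Fin n → S) (s : S) : Prop :=
  ∃ L : List (Fin n × List S),
    s = (L.map fun t => t.2.foldl (fun b a => a * b) (p t.1)).sum ∧
    degr f x s
      = (L.map fun t => degr f x (p t.1) + (t.2.map (degr f x)).sum).foldr max ⊥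

/-- The left Euclidean division algorithm for `(S,x)` over `R`. -/
def LeftEDA (f : R →+* S) (x : S) : Prop :=
  ∀ (n : ℕ) (p : Fin n → S) (q : S), q ≠ 0 →
    (∀ i, degl f x (p i) ≤ degl f x q) →
    lcl f x q ∈ rIdealGen R (Set.range fun i => lcl f x (p i)) →
    ∃ s, LDegAddMem f x p s ∧ degl f x (q - s) < degl f x q

/-- The right Euclidean division algorithm for `(S,x)` over `R`. -/
def RightEDA (f : R →+* S) (x : S) : Prop :=
  ∀ (n : ℕ) (p : Fin n → S) (q : S), q ≠ 0 →
    (∀ i, degr f x (p i) ≤ degr f x q) →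
    lcr f x q ∈ lIdealGen R (Set.range fun i => lcr f x (p i)) →
    ∃ s, RDegAddMem f x p s ∧ degr f x (q - s) < degr f x q

/-- The maps `πᵢᵐ`: the sum of all `C(m,i)` compositions of `i` copies of `σ`
and `m - i` copies of `δ`. -/
def pimap (σ δ : R → R) : ℕ → ℕ → R → R
  | 0, 0 => id
  | _ + 1, 0 => fun _ => 0
  | 0, m + 1 => fun r => δ (pimap σ δ 0 m r)
  | i + 1, m + 1 => fun r => σ (pimap σ δ i m r) + δ (pimap σ δ (i + 1) m r)

/-- `(S,x)` realizes the generalized polynomial ring `R[X;σ,δ]`: `{1,x,x²,…}` is a left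
`R`-basis and multiplication is given by `(rxᵐ)(sxⁿ) = Σᵢ (r πᵢᵐ(s)) x^{i+n}`. -/
def IsGPolyRing (σ δ : R → R) (f : R →+* S) (x : S) : Prop :=
  Function.Injective f ∧ PowAssoc x ∧ Function.Bijective (lpoly f x) ∧
    ∀ (r s : R) (m n : ℕ),
      (f r * pw x m) * (f s * pw x n)
        = ∑ i ∈ Finset.range (m + 1), f (r * pimap σ δ i m s) * pw x (i + n)

/-- `(S,x)` realizes the flipped generalized polynomial ring `R[X;σ,δ]^fl`:
multiplication is given by `(rxᵐ)(sxⁿ) = Σᵢ τₙ(r, πᵢᵐ(s)) x^{i+n}`. -/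
def IsFlipGPolyRing (σ δ : R → R) (f : R →+* S) (x : S) : Prop :=
  Function.Injective f ∧ PowAssoc x ∧ Function.Bijective (lpoly f x) ∧
    ∀ (r s : R) (m n : ℕ),
      (f r * pw x m) * (f s * pw x n)
        = ∑ i ∈ Finset.range (m + 1),
            f (if Even n then r * pimap σ δ i m s else pimap σ δ i m s * r) * pw x (i + n)

end Defs


section Aux

variable {R : Type*} {S : Type*} [NonAssocRing R] [NonAssocRing S]

lemma pimap_add' (σ δ : R → R) (hσ : ∀ a b : R, σ (a + b) = σ a + σ b)
    (hδ : ∀ a b : R, δ (a + b) = δ a + δ b) :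
    ∀ m i (r s : R), pimap σ δ i m (r + s) = pimap σ δ i m r + pimap σ δ i m s := by
  intro m
  induction m with
  | zero =>
    intro i r s
    cases i with
    | zero => rfl
    | succ i => simp [pimap]
  | succ m ih =>
    intro i r s
    cases i with
    | zero => simp [pimap, ih, hδ]
    | succ i => simp [pimap, ih, hσ, hδ]; abel

lemma pimap_zero' (σ δ : R → R) (hσ : ∀ a b : R, σ (a + b) = σ a + σ b)
    (hδ : ∀ a b : R, δ (a + b) = δ a + δ b) (i m : ℕ) :
    pimap σ δ i m 0 = 0 := by
  have h := pimap_add' σ δ hσ hδ m i 0 0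
  simp only [add_zero] at h
  exact (add_left_cancel (a := pimap σ δ i m 0) (by rw [add_zero]; exact h)).symm

lemma sigma_zero (σ : R → R) (hσ : ∀ a b : R, σ (a + b) = σ a + σ b) : σ 0 = 0 := by
  have h := hσ 0 0
  simp only [add_zero] at h
  exact (add_left_cancel (a := σ 0) (by rw [add_zero]; exact h)).symm

lemma iter_sigma_zero (σ : R → R) (hσ : ∀ a b : R, σ (a + b) = σ a + σ b) (n : ℕ) :
    σ^[n] (0 : R) = 0 := by
  induction n with
  | zero => rfl
  | succ n ih => rw [Function.iterate_succ_apply', ih, sigma_zero σ hσ]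

lemma pimap_gt (σ δ : R → R) (hσ : ∀ a b : R, σ (a + b) = σ a + σ b)
    (hδ : ∀ a b : R, δ (a + b) = δ a + δ b) :
    ∀ m i, m < i → ∀ r : R, pimap σ δ i m r = 0 := by
  intro m
  induction m with
  | zero =>
    intro i hi r
    cases i with
    | zero => omega
    | succ i => simp [pimap]
  | succ m ih =>
    intro i hi r
    cases i with
    | zero => omega
    | succ i =>
      have h1 : m < i := by omega
      have h2 : m < i + 1 := by omega
      simp [pimap, ih i h1, ih (i+1) h2, sigma_zero σ hσ, sigma_zero δ hδ]

lemma pimap_diag (σ δ : R → R) (hσ : ∀ a b : R, σ (a + b) = σ a + σ b)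
    (hδ : ∀ a b : R, δ (a + b) = δ a + δ b) :
    ∀ m (r : R), pimap σ δ m m r = σ^[m] r := by
  intro m
  induction m with
  | zero => intro r; rfl
  | succ m ih =>
    intro r
    have := pimap_gt σ δ hσ hδ m (m+1) (by omega) r
    simp [pimap, ih, this, sigma_zero δ hδ, Function.iterate_succ_apply']

lemma lpoly_single (f : R →+* S) (x : S) (i : ℕ) (r : R) :
    lpoly f x (Finsupp.single i r) = f r * pw x i :=
  Finsupp.sum_single_index (by simp)

noncomputable def lpolyHom (f : R →+* S) (x : S) : (ℕ →₀ R) →+ S where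
  toFun := lpoly f x
  map_zero' := Finsupp.sum_zero_index
  map_add' a b := by
    show lpoly f x (a + b) = lpoly f x a + lpoly f x b
    simp only [lpoly]
    exact Finsupp.sum_add_index' (fun i => by simp) (fun i r s => by rw [map_add, add_mul])

lemma xpow_mul (f : R →+* S) (x : S) (σ δ : R → R) (hpoly : IsGPolyRing σ δ f x)
    (i : ℕ) (r : R) :
    pw x i * f r = ∑ j ∈ Finset.range (i + 1), f (pimap σ δ j i r) * pw x j := by
  have h := hpoly.2.2.2 1 r i 0
  simpa [pw] using h

/-- Change of coordinates from right to left representation. -/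
noncomputable def Tmap (σ δ : R → R) (c : ℕ →₀ R) : ℕ →₀ R :=
  c.sum fun i r => ∑ j ∈ Finset.range (i + 1), Finsupp.single j (pimap σ δ j i r)

lemma lpoly_Tmap (f : R →+* S) (x : S) (σ δ : R → R) (hpoly : IsGPolyRing σ δ f x)
    (c : ℕ →₀ R) : lpoly f x (Tmap σ δ c) = rpoly f x c := by
  have h0 : lpoly f x (Tmap σ δ c) = (lpolyHom f x) (Tmap σ δ c) := rfl
  rw [h0, Tmap, map_finsuppSum, rpoly]
  refine Finsupp.sum_congr fun i _ => ?_
  rw [map_sum]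
  simp only [lpolyHom, AddMonoidHom.coe_mk, ZeroHom.coe_mk, lpoly_single]
  change (∑ j ∈ Finset.range (i + 1), lpoly f x (Finsupp.single j (pimap σ δ j i (c i)))) = _
  simp only [lpoly_single]
  exact (xpow_mul f x σ δ hpoly i _).symm

lemma Tmap_apply (σ δ : R → R) (c : ℕ →₀ R) (j : ℕ) :
    Tmap σ δ c j = ∑ i ∈ c.support, (if j ≤ i then pimap σ δ j i (c i) else 0) := by
  rw [Tmap, Finsupp.sum_apply, Finsupp.sum]
  refine Finset.sum_congr rfl fun i _ => ?_
  rw [Finset.sum_apply']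
  simp only [Finsupp.single_apply]
  rw [Finset.sum_ite_eq' (Finset.range (i + 1)) j]
  simp [Nat.lt_succ_iff]

lemma Tmap_zero (σ δ : R → R) : Tmap σ δ (0 : ℕ →₀ R) = 0 :=
  Finsupp.sum_zero_index

lemma Tmap_add (σ δ : R → R) (hσ : ∀ a b : R, σ (a + b) = σ a + σ b)
    (hδ : ∀ a b : R, δ (a + b) = δ a + δ b) (a b : ℕ →₀ R) :
    Tmap σ δ (a + b) = Tmap σ δ a + Tmap σ δ b :=
  Finsupp.sum_add_index' (fun i => by simp [pimap_zero' σ δ hσ hδ])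
    (fun i r s => by simp [pimap_add' σ δ hσ hδ, Finsupp.single_add, Finset.sum_add_distrib])

lemma Tmap_single (σ δ : R → R) (hσ : ∀ a b : R, σ (a + b) = σ a + σ b)
    (hδ : ∀ a b : R, δ (a + b) = δ a + δ b) (n : ℕ) (a : R) :
    Tmap σ δ (Finsupp.single n a) = ∑ j ∈ Finset.range (n + 1), Finsupp.single j (pimap σ δ j n a) :=
  Finsupp.sum_single_index (by simp [pimap_zero' σ δ hσ hδ])

lemma Tmap_single_apply (σ δ : R → R) (hσ : ∀ a b : R, σ (a + b) = σ a + σ b)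
    (hδ : ∀ a b : R, δ (a + b) = δ a + δ b) (n : ℕ) (a : R) (j : ℕ) :
    Tmap σ δ (Finsupp.single n a) j = if j ≤ n then pimap σ δ j n a else 0 := by
  rw [Tmap_single σ δ hσ hδ, Finset.sum_apply']
  simp only [Finsupp.single_apply]
  rw [Finset.sum_ite_eq' (Finset.range (n + 1)) j]
  simp [Nat.lt_succ_iff]

lemma Tmap_surj (σ δ : R → R) (hσ : ∀ a b : R, σ (a + b) = σ a + σ b)
    (hδ : ∀ a b : R, δ (a + b) = δ a + δ b) (hσbij : Function.Bijective σ) :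
    Function.Surjective (Tmap σ δ (R := R)) := by
  have key : ∀ n (d : ℕ →₀ R), (∀ j, n ≤ j → d j = 0) → ∃ c, Tmap σ δ c = d := by
    intro n
    induction n with
    | zero =>
      intro d hd
      refine ⟨0, ?_⟩
      have hd0 : d = 0 := Finsupp.ext fun j => hd j (Nat.zero_le j)
      rw [hd0]; exact Tmap_zero σ δ
    | succ n ih =>
      intro d hd
      obtain ⟨a, ha⟩ := (hσbij.iterate n).surjective (d n)
      set t := Tmap σ δ (Finsupp.single n a) with ht
      have htapp : ∀ j, t j = if j ≤ n then pimap σ δ j n a else 0 :=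
        fun j => Tmap_single_apply σ δ hσ hδ n a j
      have hd' : ∀ j, n ≤ j → (d - t) j = 0 := by
        intro j hj
        rcases eq_or_lt_of_le hj with h | h
        · subst h
          rw [Finsupp.sub_apply, htapp, if_pos le_rfl,
            pimap_diag σ δ hσ hδ, ha, sub_self]
        · rw [Finsupp.sub_apply, hd j (by omega), htapp, if_neg (by omega), sub_zero]
      obtain ⟨c', hc'⟩ := ih (d - t) hd'
      refine ⟨Finsupp.single n a + c', ?_⟩
      rw [Tmap_add σ δ hσ hδ, hc', ← ht]
      abel
  intro d
  obtain ⟨n, hn⟩ := d.support.exists_nat_subset_range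
  refine key n d fun j hj => Finsupp.notMem_support_iff.1 fun hmem => ?_
  have := hn hmem
  simp only [Finset.mem_range] at this
  omega

lemma Tmap_max (σ δ : R → R) (hσ : ∀ a b : R, σ (a + b) = σ a + σ b)
    (hδ : ∀ a b : R, δ (a + b) = δ a + δ b) (hσbij : Function.Bijective σ) (c : ℕ →₀ R) :
    (Tmap σ δ c).support.max = c.support.max := by
  rcases eq_or_ne c 0 with rfl | hc
  · rw [Tmap_zero]
  · have hne : c.support.Nonempty := Finsupp.support_nonempty_iff.2 hc
    set N := c.support.max' hne with hN
    have hNmem : N ∈ c.support := c.support.max'_mem hne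
    have hNc : c N ≠ 0 := Finsupp.mem_support_iff.1 hNmem
    have hTN : Tmap σ δ c N = σ^[N] (c N) := by
      rw [Tmap_apply]
      rw [Finset.sum_eq_single N]
      · rw [if_pos (le_refl N), pimap_diag σ δ hσ hδ]
      · intro i hi hiN
        have : i ≤ N := c.support.le_max' i hi
        rw [if_neg (by omega)]
      · intro h; exact absurd hNmem h
    have hTNne : Tmap σ δ c N ≠ 0 := by
      rw [hTN]
      intro h
      exact hNc ((hσbij.iterate N).injective (by rw [h, iter_sigma_zero σ hσ]))
    have hhigh : ∀ j, N < j → Tmap σ δ c j = 0 := by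
      intro j hj
      rw [Tmap_apply]
      refine Finset.sum_eq_zero fun i hi => ?_
      have : i ≤ N := c.support.le_max' i hi
      rw [if_neg (by omega)]
    have h1 : c.support.max = (N : WithBot ℕ) := (Finset.coe_max' hne).symm
    rw [h1]
    apply le_antisymm
    · refine Finset.max_le fun j hj => ?_
      have hj' : Tmap σ δ c j ≠ 0 := Finsupp.mem_support_iff.1 hj
      by_contra hcon
      push_neg at hcon
      have : N < j := WithBot.coe_lt_coe.mp hcon
      exact hj' (hhigh j this)
    · exact Finset.le_max (Finsupp.mem_support_iff.2 hTNne)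

end Aux

/-- in `R[X;σ,δ]` with `σ` bijective, left and right degree agree. -/
theorem stmt6 {R S : Type*} [NonAssocRing R] [NonAssocRing S] (f : R →+* S) (x : S) (σ δ : R → R)
    (hσadd : ∀ a b : R, σ (a + b) = σ a + σ b) (hδadd : ∀ a b : R, δ (a + b) = δ a + δ b)
    (hσ1 : σ 1 = 1) (hδ1 : δ 1 = 0)
    (hσbij : Function.Bijective σ)
    (hpoly : IsGPolyRing σ δ f x) :
    ∀ p : S, degl f x p = degr f x p := by
  intro p
  have hLbij := hpoly.2.2.1
  obtain ⟨c, hc⟩ := hLbij.2 p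
  obtain ⟨c', hc'⟩ := Tmap_surj σ δ hσadd hδadd hσbij c
  have hl : ∃ e : ℕ →₀ R, lpoly f x e = p := ⟨c, hc⟩
  have hr : ∃ e : ℕ →₀ R, rpoly f x e = p := by
    refine ⟨c', ?_⟩
    rw [← lpoly_Tmap f x σ δ hpoly, hc', hc]
  rw [degl, degr, dif_pos hl, dif_pos hr]
  have h1 : lpoly f x (Classical.choose hl) = p := Classical.choose_spec hl
  have h2 : rpoly f x (Classical.choose hr) = p := Classical.choose_spec hr
  have hTeq : Tmap σ δ (Classical.choose hr) = Classical.choose hl := by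
    apply hLbij.1
    rw [lpoly_Tmap f x σ δ hpoly, h2, h1]
  rw [← hTeq, Tmap_max σ δ hσadd hδadd hσbij]
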